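/- arXiv:1003.1948 — 2 statements merged into one kernel-verified Lean document; each statement's English description precedes it below -/
import Mathlib

section
/- The covariant derivative along an A-path recovers the limit of difference quotients of parallel transport: (D^α σ)(0) = lim_{t→0} [ (P^t_α)^{-1}(σ(t)) − σ(0) ] / t, for any α-section σ. -/
open scoped BigOperators Topology

set_option maxHeartbeats 1000000 in
set_option synthInstance.maxHeartbeats 400000 in
/-- The covariant derivative along an `A`-path recovers the limit
of difference quotients of parallel transport:
`(D^α σ)(0) = lim_{t→0} [ (P^t_α)⁻¹(σ(t)) − σ(0) ] / t` for any α-section `σ`.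
Here the A-path is `α = (x,y)`, `G = Γ^β_{γa}` are the connection
coefficients, `P t` is the parallel displacement `F_{γ(0)} → F_{γ(t)}`, and
`(D^α σ)(t)^β = dσ^β/dt + Γ^β_{γa}(x(t)) σ^γ(t) y^a(t)`. -/
theorem covderiv_as_limit_of_parallel_transport {n m k : ℕ}
    (ρ : Fin m → Fin n → (Fin n → ℝ) → ℝ)
    (G : Fin k → Fin k → Fin m → (Fin n → ℝ) → ℝ)
    (hG : ∀ β γ a, Continuous (G β γ a))
    (x : ℝ → Fin n → ℝ) (y : ℝ → Fin m → ℝ)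
    (hx : Continuous x) (hy : Continuous y)
    -- α is an A-path
    (hpath : ∀ t ∈ Set.Icc (0:ℝ) 1,
      HasDerivAt x (fun i => ∑ a, ρ a i (x t) * y t a) t)
    -- the parallel displacement maps `P^t_α`
    (P : ℝ → (Fin k → ℝ) ≃ₗ[ℝ] (Fin k → ℝ))
    (hP0 : ∀ v, P 0 v = v)
    (hP : ∀ v, ∀ t ∈ Set.Icc (0:ℝ) 1,
      HasDerivAt (fun s => P s v)
        (fun β => -∑ a, ∑ γ, G β γ a (x t) * (P t v) γ * y t a) t)
    -- the α-section σ, represented by its components z, smooth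
    (z : ℝ → Fin k → ℝ) (hz : ContDiff ℝ (⊤ : ℕ∞) z) :
    Filter.Tendsto
      (fun t : ℝ => t⁻¹ • ((P t).symm (z t) - z 0))
      (𝓝[≠] 0)
      (𝓝 (fun β => deriv (fun s => z s β) 0 +
        ∑ a, ∑ γ, G β γ a (x 0) * z 0 γ * y 0 a)) := by
  classical
  set Q : ℝ → (Fin k → ℝ) →L[ℝ] (Fin k → ℝ) := fun t =>
    LinearMap.toContinuousLinearMap (P t).toLinearMap with hQdef
  set M : ℝ → (Fin k → Fin k → ℝ) :=
    fun t β γ => P t (fun j => if γ = j then 1 else 0) β with hMdef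
  set M' : Fin k → Fin k → ℝ :=
    fun β γ => -∑ a, G β γ a (x 0) * y 0 a with hM'def
  have hMd : HasDerivAt M M' 0 := by
    rw [hasDerivAt_pi]; intro β
    rw [hasDerivAt_pi]; intro γ
    have h1 := hP (fun j => if γ = j then 1 else 0) 0 ⟨le_refl 0, zero_le_one⟩
    have h2 := hasDerivAt_pi.mp h1 β
    have hval : M' β γ
        = -∑ a, ∑ γ', G β γ' a (x 0) * (P 0 (fun j => if γ = j then 1 else 0)) γ' * y 0 a := by
      rw [hP0]
      simp [hM'def, mul_ite, ite_mul, Finset.sum_ite_eq, Finset.sum_ite_eq']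
    rw [hval]
    exact h2
  -- the continuous linear map from matrices to CLMs
  set Φ₀ : (Fin k → Fin k → ℝ) →ₗ[ℝ] ((Fin k → ℝ) →ₗ[ℝ] (Fin k → ℝ)) :=
    (Matrix.toLin' (R := ℝ) (m := Fin k) (n := Fin k)).toLinearMap with hΦ₀def
  set Φ : (Fin k → Fin k → ℝ) →L[ℝ] ((Fin k → ℝ) →L[ℝ] (Fin k → ℝ)) :=
    LinearMap.toContinuousLinearMap
      ((LinearMap.toContinuousLinearMap :
          ((Fin k → ℝ) →ₗ[ℝ] (Fin k → ℝ)) ≃ₗ[ℝ] ((Fin k → ℝ) →L[ℝ] (Fin k → ℝ))).toLinearMap ∘ₗ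
        Φ₀) with hΦdef
  have hΦapp : ∀ A v, Φ A v = Matrix.mulVec (Matrix.of A) v := by
    intro A v
    simp only [hΦdef, hΦ₀def, LinearMap.coe_toContinuousLinearMap', LinearMap.coe_comp,
      Function.comp_apply, LinearEquiv.coe_coe]
    exact Matrix.toLin'_apply A v
  have hQapp : ∀ t v, Q t v = P t v := by
    intro t v; simp [hQdef]
  have hΦM : ∀ t, Φ (M t) = Q t := by
    intro t
    ext v
    rw [hΦapp, hQapp]
    have hv : (P t) v = ∑ i, v i • (P t) fun j => if i = j then 1 else 0 :=
      LinearMap.pi_apply_eq_sum_univ (P t).toLinearMap v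
    rw [hv]
    simp [Matrix.mulVec, dotProduct, hMdef, mul_comm]
  have hQd : HasDerivAt Q (Φ M') 0 := by
    have h := Φ.hasFDerivAt.comp_hasDerivAt 0 hMd
    have he : (⇑Φ ∘ M) = Q := funext hΦM
    rwa [he] at h
  have hQ0 : Q 0 = 1 := by
    ext v
    rw [hQapp, hP0]
    rfl
  -- Q t is a unit with inverse (P t).symm
  have hinv : ∀ t, Ring.inverse (Q t)
      = LinearMap.toContinuousLinearMap (P t).symm.toLinearMap := by
    intro t
    exact Ring.inverse_unit
      ⟨Q t, LinearMap.toContinuousLinearMap (P t).symm.toLinearMap,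
        by ext v; simp [hQdef, ContinuousLinearMap.mul_apply],
        by ext v; simp [hQdef, ContinuousLinearMap.mul_apply]⟩
  have hRd : HasDerivAt (fun t => Ring.inverse (Q t)) (-(Φ M')) 0 := by
    have h1 : HasFDerivAt (Ring.inverse : ((Fin k → ℝ) →L[ℝ] (Fin k → ℝ)) → _)
        (-(ContinuousLinearMap.mulLeftRight ℝ ((Fin k → ℝ) →L[ℝ] (Fin k → ℝ)) 1 1)) (Q 0) := by
      have h := hasFDerivAt_ringInverse (𝕜 := ℝ)
        (1 : ((Fin k → ℝ) →L[ℝ] (Fin k → ℝ))ˣ)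
      simpa [hQ0] using h
    have h2 := h1.comp_hasDerivAt 0 hQd
    have h3 : (-(ContinuousLinearMap.mulLeftRight ℝ ((Fin k → ℝ) →L[ℝ] (Fin k → ℝ)) 1 1)) (Φ M')
        = -(Φ M') := by
      simp [ContinuousLinearMap.mulLeftRight_apply]
    rw [h3] at h2
    exact h2
  have hzd : HasDerivAt z (deriv z 0) 0 := (hz.differentiable (by simp) 0).hasDerivAt
  have hu : HasDerivAt (fun t => (Ring.inverse (Q t)) (z t))
      ((-(Φ M')) (z 0) + (Ring.inverse (Q 0)) (deriv z 0)) 0 := hRd.clm_apply hzd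
  have heq : (fun t => (Ring.inverse (Q t)) (z t)) = fun t => (P t).symm (z t) := by
    funext t
    rw [hinv t]
    simp
  rw [heq] at hu
  have hval : ((-(Φ M')) (z 0) + (Ring.inverse (Q 0)) (deriv z 0))
      = (fun β => deriv (fun s => z s β) 0 +
          ∑ a, ∑ γ, G β γ a (x 0) * z 0 γ * y 0 a) := by
    have h1 : (Ring.inverse (Q 0)) (deriv z 0) = deriv z 0 := by
      rw [hQ0, Ring.inverse_one]; rfl
    funext β
    have h2 : deriv (fun s => z s β) 0 = deriv z 0 β := (hasDerivAt_pi.mp hzd β).deriv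
    have h3 : ((Φ M') (z 0)) β = ∑ γ, (-∑ a, G β γ a (x 0) * y 0 a) * z 0 γ := by
      rw [hΦapp]
      simp [Matrix.mulVec, dotProduct, hM'def]
    have h4 : ∑ γ, (-∑ a, G β γ a (x 0) * y 0 a) * z 0 γ
        = -∑ a, ∑ γ, G β γ a (x 0) * z 0 γ * y 0 a := by
      calc ∑ γ, (-∑ a, G β γ a (x 0) * y 0 a) * z 0 γ
          = ∑ γ, ∑ a, -(G β γ a (x 0) * z 0 γ * y 0 a) := by
            refine Finset.sum_congr rfl fun γ _ => ?_
            rw [neg_mul, Finset.sum_mul, ← Finset.sum_neg_distrib]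
            exact Finset.sum_congr rfl fun a _ => by ring
        _ = -∑ a, ∑ γ, G β γ a (x 0) * z 0 γ * y 0 a := by
            rw [Finset.sum_comm, ← Finset.sum_neg_distrib]
            exact Finset.sum_congr rfl fun a _ => Finset.sum_neg_distrib _
    rw [h1]
    simp only [Pi.add_apply, Pi.neg_apply, ContinuousLinearMap.neg_apply]
    rw [h3, h4, h2]
    ring
  rw [hval] at hu
  have hsymm0 : (P 0).symm (z 0) = z 0 := by
    have h := hP0 ((P 0).symm (z 0))
    rw [LinearEquiv.apply_symm_apply] at h
    exact h.symm
  have hfin := hasDerivAt_iff_tendsto_slope.mp hu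
  simpa [slope_fun_def, hsymm0] using hfin
end

section
/- For any A-path α with base curve γ, the covariant derivative of a Riemannian metric g along α is the derivative of g under parallel transport: (D^α g)(σ₁,σ₂) = lim_{t→0} (1/t)[ g_{γ(t)}(P^t_α σ₁, P^t_α σ₂) − g_{γ(0)}(σ₁,σ₂) ] for σ₁, σ₂ ∈ F_{γ(0)}, where P^t_α: F_{γ(0)} → F_{γ(t)} is parallel displacement along α defined by D. -/
open scoped BigOperators Topology

/-- For any `A`-path `α = (x,y)` with base curve `γ = x`, the
covariant derivative of a Riemannian metric `g` along `α` is the derivative of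
`g` under parallel transport:
`(D^α g)(σ₁,σ₂) = lim_{t→0} (1/t)[ g_{γ(t)}(P^t_α σ₁, P^t_α σ₂) − g_{γ(0)}(σ₁,σ₂) ]`
for `σ₁, σ₂ ∈ F_{γ(0)}`, where `P^t_α : F_{γ(0)} → F_{γ(t)}` is the parallel
displacement along `α` defined by the connection `D` (coefficients `G`).
Here `(D^α g)(σ₁,σ₂) = (dg_{μν}/dt − g_{μη}Γ^η_{νa}y^a − g_{ην}Γ^η_{μa}y^a)σ₁^μσ₂^ν`
evaluated at `t = 0`. -/
theorem covderiv_of_metric_as_limit {n m k : ℕ}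
    (ρ : Fin m → Fin n → (Fin n → ℝ) → ℝ)
    (G : Fin k → Fin k → Fin m → (Fin n → ℝ) → ℝ)
    (hG : ∀ β γ a, Continuous (G β γ a))
    (g : Fin k → Fin k → (Fin n → ℝ) → ℝ)
    (hg : ∀ μ ν, ContDiff ℝ (⊤ : ℕ∞) (g μ ν))
    (hgsymm : ∀ μ ν x, g μ ν x = g ν μ x)
    (x : ℝ → Fin n → ℝ) (y : ℝ → Fin m → ℝ)
    (hy : Continuous y)
    -- α is an A-path
    (hpath : ∀ t ∈ Set.Icc (0:ℝ) 1,
      HasDerivAt x (fun i => ∑ a, ρ a i (x t) * y t a) t)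
    -- the parallel displacement maps P^t_α
    (P : ℝ → (Fin k → ℝ) ≃ₗ[ℝ] (Fin k → ℝ))
    (hP0 : ∀ v, P 0 v = v)
    (hP : ∀ v, ∀ t ∈ Set.Icc (0:ℝ) 1,
      HasDerivAt (fun s => P s v)
        (fun β => -∑ a, ∑ γ, G β γ a (x t) * (P t v) γ * y t a) t)
    (σ₁ σ₂ : Fin k → ℝ) :
    Filter.Tendsto
      (fun t : ℝ => t⁻¹ *
        ((∑ μ, ∑ ν, g μ ν (x t) * (P t σ₁) μ * (P t σ₂) ν) -
          ∑ μ, ∑ ν, g μ ν (x 0) * σ₁ μ * σ₂ ν))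
      (𝓝[>] 0)
      (𝓝 (∑ μ, ∑ ν, σ₁ μ * σ₂ ν *
        (deriv (fun t => g μ ν (x t)) 0 -
          (∑ η, ∑ a, g μ η (x 0) * G η ν a (x 0) * y 0 a) -
          ∑ η, ∑ a, g η ν (x 0) * G η μ a (x 0) * y 0 a))) := by
  have h0 : (0:ℝ) ∈ Set.Icc (0:ℝ) 1 := by norm_num
  have hx0 := hpath 0 h0
  have hgd : ∀ μ ν, HasDerivAt (fun t => g μ ν (x t)) (deriv (fun t => g μ ν (x t)) 0) 0 := by
    intro μ ν
    have : DifferentiableAt ℝ (fun t => g μ ν (x t)) 0 :=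
      DifferentiableAt.comp 0 (((hg μ ν).differentiable (by simp)).differentiableAt)
        hx0.differentiableAt
    exact this.hasDerivAt
  have hP1 : ∀ β, HasDerivAt (fun s => P s σ₁ β)
      (-∑ a, ∑ γ, G β γ a (x 0) * σ₁ γ * y 0 a) 0 := by
    intro β
    have := hasDerivAt_pi.mp (hP σ₁ 0 h0) β
    simpa [hP0] using this
  have hP2 : ∀ β, HasDerivAt (fun s => P s σ₂ β)
      (-∑ a, ∑ γ, G β γ a (x 0) * σ₂ γ * y 0 a) 0 := by
    intro β
    have := hasDerivAt_pi.mp (hP σ₂ 0 h0) β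
    simpa [hP0] using this
  set d : Fin k → Fin k → ℝ := fun μ ν => deriv (fun t => g μ ν (x t)) 0 with hd
  set v₁ : Fin k → ℝ := fun β => -∑ a, ∑ γ, G β γ a (x 0) * σ₁ γ * y 0 a with hv₁
  set v₂ : Fin k → ℝ := fun β => -∑ a, ∑ γ, G β γ a (x 0) * σ₂ γ * y 0 a with hv₂
  have hf : HasDerivAt (fun t => ∑ μ, ∑ ν, g μ ν (x t) * P t σ₁ μ * P t σ₂ ν)
      (∑ μ, ∑ ν, ((d μ ν * σ₁ μ + g μ ν (x 0) * v₁ μ) * σ₂ ν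
        + (g μ ν (x 0) * σ₁ μ) * v₂ ν)) 0 := by
    apply HasDerivAt.fun_sum; intro μ _
    apply HasDerivAt.fun_sum; intro ν _
    have h1 := ((hgd μ ν).fun_mul (hP1 μ)).fun_mul (hP2 ν)
    simpa [hP0, hd, hv₁, hv₂] using h1
  have hval : (∑ μ, ∑ ν, ((d μ ν * σ₁ μ + g μ ν (x 0) * v₁ μ) * σ₂ ν
        + (g μ ν (x 0) * σ₁ μ) * v₂ ν))
      = ∑ μ, ∑ ν, σ₁ μ * σ₂ ν *
        (d μ ν - (∑ η, ∑ a, g μ η (x 0) * G η ν a (x 0) * y 0 a) -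
          ∑ η, ∑ a, g η ν (x 0) * G η μ a (x 0) * y 0 a) := by
    have I2 : ∀ μ : Fin k, (∑ ν, (g μ ν (x 0) * σ₁ μ) * v₂ ν)
        = ∑ ν, -(σ₁ μ * σ₂ ν * ∑ η, ∑ a, g μ η (x 0) * G η ν a (x 0) * y 0 a) := by
      intro μ
      calc (∑ ν, (g μ ν (x 0) * σ₁ μ) * v₂ ν)
          = ∑ ν, ∑ γ, ∑ a, -((g μ ν (x 0) * σ₁ μ) * (G ν γ a (x 0) * σ₂ γ * y 0 a)) := by
            refine Finset.sum_congr rfl fun ν _ => ?_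
            simp only [hv₂]
            rw [Finset.sum_comm]
            simp [Finset.mul_sum]
        _ = ∑ γ, ∑ ν, ∑ a, -((g μ ν (x 0) * σ₁ μ) * (G ν γ a (x 0) * σ₂ γ * y 0 a)) :=
            Finset.sum_comm
        _ = ∑ ν, -(σ₁ μ * σ₂ ν * ∑ η, ∑ a, g μ η (x 0) * G η ν a (x 0) * y 0 a) := by
            refine Finset.sum_congr rfl fun ν _ => ?_
            simp only [Finset.mul_sum, mul_neg, neg_neg, ← Finset.sum_neg_distrib]
            refine Finset.sum_congr rfl fun η _ => ?_
            refine Finset.sum_congr rfl fun a _ => ?_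
            ring
    have I1 : (∑ μ, ∑ ν, (g μ ν (x 0) * v₁ μ) * σ₂ ν)
        = ∑ μ, ∑ ν, -(σ₁ μ * σ₂ ν * ∑ η, ∑ a, g η ν (x 0) * G η μ a (x 0) * y 0 a) := by
      calc (∑ μ, ∑ ν, (g μ ν (x 0) * v₁ μ) * σ₂ ν)
          = ∑ ν, ∑ μ, (g μ ν (x 0) * v₁ μ) * σ₂ ν := Finset.sum_comm
        _ = ∑ ν, ∑ γ, ∑ μ, ∑ a, -((g μ ν (x 0) * σ₂ ν) * (G μ γ a (x 0) * σ₁ γ * y 0 a)) := by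
            refine Finset.sum_congr rfl fun ν _ => ?_
            have h : (∑ μ, (g μ ν (x 0) * v₁ μ) * σ₂ ν)
                = ∑ μ, ∑ γ, ∑ a, -((g μ ν (x 0) * σ₂ ν) * (G μ γ a (x 0) * σ₁ γ * y 0 a)) := by
              refine Finset.sum_congr rfl fun μ _ => ?_
              simp only [hv₁]
              rw [Finset.sum_comm]
              simp only [Finset.mul_sum, Finset.sum_mul, neg_mul, mul_neg,
                ← Finset.sum_neg_distrib]
              refine Finset.sum_congr rfl fun γ _ => ?_
              refine Finset.sum_congr rfl fun a _ => ?_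
              ring
            rw [h, Finset.sum_comm]
        _ = ∑ ν, ∑ μ, -(σ₁ μ * σ₂ ν * ∑ η, ∑ a, g η ν (x 0) * G η μ a (x 0) * y 0 a) := by
            refine Finset.sum_congr rfl fun ν _ => ?_
            refine Finset.sum_congr rfl fun μ _ => ?_
            simp only [Finset.mul_sum, mul_neg, neg_neg, ← Finset.sum_neg_distrib]
            refine Finset.sum_congr rfl fun η _ => ?_
            refine Finset.sum_congr rfl fun a _ => ?_
            ring
        _ = ∑ μ, ∑ ν, -(σ₁ μ * σ₂ ν * ∑ η, ∑ a, g η ν (x 0) * G η μ a (x 0) * y 0 a) :=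
            Finset.sum_comm
    calc (∑ μ, ∑ ν, ((d μ ν * σ₁ μ + g μ ν (x 0) * v₁ μ) * σ₂ ν
          + (g μ ν (x 0) * σ₁ μ) * v₂ ν))
        = (∑ μ, ∑ ν, (σ₁ μ * σ₂ ν * d μ ν + (g μ ν (x 0) * v₁ μ) * σ₂ ν))
          + ∑ μ, (∑ ν, (g μ ν (x 0) * σ₁ μ) * v₂ ν) := by
          rw [← Finset.sum_add_distrib]
          refine Finset.sum_congr rfl fun μ _ => ?_
          rw [← Finset.sum_add_distrib]
          refine Finset.sum_congr rfl fun ν _ => ?_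
          ring
      _ = (∑ μ, ∑ ν, (σ₁ μ * σ₂ ν * d μ ν
            + -(σ₁ μ * σ₂ ν * ∑ η, ∑ a, g η ν (x 0) * G η μ a (x 0) * y 0 a)))
          + ∑ μ, ∑ ν, -(σ₁ μ * σ₂ ν * ∑ η, ∑ a, g μ η (x 0) * G η ν a (x 0) * y 0 a) := by
          rw [Finset.sum_congr rfl fun μ _ => I2 μ]
          congr 1
          simp only [Finset.sum_add_distrib]
          rw [I1]
      _ = ∑ μ, ∑ ν, σ₁ μ * σ₂ ν *
          (d μ ν - (∑ η, ∑ a, g μ η (x 0) * G η ν a (x 0) * y 0 a) -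
            ∑ η, ∑ a, g η ν (x 0) * G η μ a (x 0) * y 0 a) := by
          rw [← Finset.sum_add_distrib]
          refine Finset.sum_congr rfl fun μ _ => ?_
          rw [← Finset.sum_add_distrib]
          refine Finset.sum_congr rfl fun ν _ => ?_
          ring
  rw [hval] at hf
  simp only [hd] at hf
  have key := hasDerivAt_iff_tendsto_slope.mp hf
  have key' := key.mono_left (nhdsWithin_mono 0 (fun t ht => by
    simp only [Set.mem_compl_iff, Set.mem_singleton_iff]
    exact ne_of_gt ht))
  refine key'.congr fun t => ?_
  have hf0 : (∑ μ, ∑ ν, g μ ν (x 0) * P 0 σ₁ μ * P 0 σ₂ ν)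
      = ∑ μ, ∑ ν, g μ ν (x 0) * σ₁ μ * σ₂ ν := by simp [hP0]
  simp only [slope_def_field, hf0]
  rw [div_eq_inv_mul]
  ring_nf
end
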